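/- arXiv:1311.2117 — 4 statements merged into one kernel-verified Lean document; each statement's English description precedes it below -/
import Mathlib

section
/- Let n = 2m with m ≥ 1, and let E = {λ ∈ F_{2^n} : λ^{2^m} + λ = 1}. Then for every x ∈ F_{2^n} \ F_{2^m} there exists a unique pair (u, λ) ∈ F_{2^m}^* × E such that x = uλ. -/
/-! If `x = u λ` with `u` fixed by the involution `σ : y ↦ y ^ 2 ^ m` and `σ λ + λ = 1`, then
`σ x + x = u (σ λ + λ) = u`; so `u` is forced to be the "trace" `σ x + x`, which is nonzero exactly
when `x ∉ F_{2^m}`, and then `λ = u⁻¹ x`. -/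

section Involution

variable {K : Type*} [DivisionRing K] (σ : K →+* K)

theorem map_add_self_eq_of_eq_mul {x u μ : K} (hu : σ u = u) (hμ : σ μ + μ = 1)
    (hx : x = u * μ) : σ x + x = u := by
  rw [hx, map_mul, hu, ← mul_add, hμ, mul_one]

theorem existsUnique_eq_fixed_mul_of_map_add_self_ne_zero (hσ : Function.Involutive σ) {x : K}
    (hx : σ x + x ≠ 0) :
    ∃! p : K × K, σ p.1 = p.1 ∧ p.1 ≠ 0 ∧ σ p.2 + p.2 = 1 ∧ x = p.1 * p.2 := by
  set u := σ x + x
  have hu : σ u = u := by rw [map_add, hσ x, add_comm]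
  refine ⟨(u, u⁻¹ * x), ⟨hu, hx, ?_, (mul_inv_cancel_left₀ hx x).symm⟩, ?_⟩
  · rw [map_mul, map_inv₀, hu, ← mul_add, inv_mul_cancel₀ hx]
  · rintro ⟨v, μ⟩ ⟨hv, hv0, hμ, hxvμ⟩
    obtain rfl : v = u := (map_add_self_eq_of_eq_mul σ hv hμ hxvμ).symm
    rw [hxvμ, inv_mul_cancel_left₀ hv0]

end Involution

theorem FiniteField.charP_two_of_card_eq_two_pow {F : Type*} [Field F] [Fintype F] {n : ℕ}
    (hn : n ≠ 0) (hF : Fintype.card F = 2 ^ n) : CharP F 2 :=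
  ringChar.of_eq <| FiniteField.even_card_iff_char_two.mpr <| by
    rw [hF, Nat.pow_mod, Nat.mod_self, zero_pow hn, Nat.zero_mod]

theorem stmt_0 (m : ℕ) (hm : 1 ≤ m) (F : Type*) [Field F] [Fintype F]
    (hF : Fintype.card F = 2 ^ (2 * m)) (x : F) (hx : x ^ 2 ^ m ≠ x) :
    ∃! p : F × F, p.1 ^ 2 ^ m = p.1 ∧ p.1 ≠ 0 ∧ p.2 ^ 2 ^ m + p.2 = 1 ∧ x = p.1 * p.2 := by
  have := FiniteField.charP_two_of_card_eq_two_pow (by omega) hF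
  have hσ : Function.Involutive (iterateFrobenius F 2 m) := fun y => by
    rw [iterateFrobenius_def, iterateFrobenius_def, ← pow_mul, ← pow_add, ← two_mul, ← hF,
      FiniteField.pow_card]
  have hx' : iterateFrobenius F 2 m x + x ≠ 0 := by
    rwa [iterateFrobenius_def, Ne, CharTwo.add_eq_zero]
  simpa only [iterateFrobenius_def] using
    existsUnique_eq_fixed_mul_of_map_add_self_ne_zero _ hσ hx'
end

section
/- Let m be odd and gcd(s, m) = 1. For a ∈ F_{2^m}, Σ_{x ∈ F_{2^m}} (-1)^{Tr^m_1(x^{2^s+1} + a x)} = 0 if and only if Tr^m_1(a) = 0. -/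
open Finset

/-- The sign `(-1)^{Tr(y)}` where `Tr(y) = ∑_{i<m} y^{2^i}` is the absolute trace
(valued in the prime field, viewed inside `F`). -/
def chi {F : Type*} [Field F] [DecidableEq F] (m : ℕ) (y : F) : ℤ :=
  if (∑ i ∈ Finset.range m, y ^ 2 ^ i) = 0 then 1 else -1

/-!
Let `Q x = x ^ (2 ^ s + 1) + a x`, `χ = (-1) ^ Tr` and `S = ∑ₓ χ (Q x)`. Since
`Q (x + h) - Q x - Q h = x ^ (2 ^ s) h + x h ^ (2 ^ s)` has the same trace as `x · L h` with
`L h = h ^ (2 ^ (-s)) + h ^ (2 ^ s)`, substituting `x + h` for `x` in `S²` and summing the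
character over `x` first gives `S² = 2 ^ m ∑_{L h = 0} χ (Q h)`. If `L h = 0` then
`h ^ (2 ^ (2s)) = h`, and `gcd (2s, m) = 1` forces `h ∈ 𝔽₂`. Hence
`S² = 2 ^ m (χ 0 + χ (1 + a)) = 2 ^ m (1 - χ a)`, because `Tr 1 = m = 1` for odd `m`.
-/

lemma pow_pow_gcd_eq_self {M : Type*} [Monoid M] {x : M} {k a b : ℕ}
    (ha : x ^ k ^ a = x) (hb : x ^ k ^ b = x) : x ^ k ^ Nat.gcd a b = x := by
  have hper {n : ℕ} : Function.IsPeriodicPt (· ^ k) n x ↔ x ^ k ^ n = x := by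
    rw [Function.IsPeriodicPt, Function.IsFixedPt, pow_iterate]
  exact hper.mp ((hper.mpr ha).gcd (hper.mpr hb))

lemma sq_sum_addChar_eq_card_mul_sum_radical {F R : Type*} [CommRing F] [Fintype F]
    [DecidableEq F] [CharP F 2] [CommRing R] [IsDomain R] {ψ : AddChar F R}
    (hψ : ψ.IsPrimitive) {Q L : F → F}
    (hQ : ∀ x h, ψ (Q (x + h)) = ψ (Q x) * ψ (Q h) * ψ (x * L h)) :
    (∑ x, ψ (Q x)) ^ 2 = Fintype.card F * ∑ h with L h = 0, ψ (Q h) := by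
  have hψ_mul_self (y : F) : ψ y * ψ y = 1 := by
    rw [← AddChar.map_add_eq_mul, CharTwo.add_self_eq_zero, AddChar.map_zero_eq_one]
  calc (∑ x, ψ (Q x)) ^ 2 = ∑ x, ∑ h, ψ (Q x) * ψ (Q (x + h)) := by
        rw [sq, Finset.sum_mul]
        refine Finset.sum_congr rfl fun x _ => ?_
        rw [← Finset.mul_sum, ← Equiv.sum_comp (Equiv.addLeft x) (fun y => ψ (Q y))]
        rfl
    _ = ∑ h, ψ (Q h) * ∑ x, ψ (x * L h) := by
        rw [Finset.sum_comm]
        refine Finset.sum_congr rfl fun h _ => ?_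
        rw [Finset.mul_sum]
        refine Finset.sum_congr rfl fun x _ => ?_
        rw [hQ, ← mul_assoc, ← mul_assoc, hψ_mul_self, one_mul]
    _ = Fintype.card F * ∑ h with L h = 0, ψ (Q h) := by
        rw [Finset.sum_filter, Finset.mul_sum]
        refine Finset.sum_congr rfl fun h _ => ?_
        rw [AddChar.sum_mulShift _ hψ]
        split_ifs <;> simp [mul_comm]

def absTrace {F : Type*} [CommSemiring F] (m : ℕ) (y : F) : F := ∑ i ∈ range m, y ^ 2 ^ i

lemma chi_eq_ite_absTrace {F : Type*} [Field F] [DecidableEq F] (m : ℕ) (y : F) :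
    chi m y = if absTrace m y = 0 then 1 else -1 := rfl

section TraceCharacter

variable {F : Type*} [Field F] [Fintype F] {m : ℕ}

lemma pow_two_pow_mul_eq_self (hF : Fintype.card F = 2 ^ m) (y : F) (n : ℕ) :
    y ^ 2 ^ (m * n) = y := by
  rw [pow_mul, ← hF, FiniteField.pow_card_pow]

lemma absTrace_pow_two (hF : Fintype.card F = 2 ^ m) (y : F) :
    absTrace m (y ^ 2) = absTrace m y := by
  have h := (Finset.sum_range_succ (fun i => y ^ 2 ^ i) m).symm.trans
    (Finset.sum_range_succ' (fun i => y ^ 2 ^ i) m)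
  rw [← hF, FiniteField.pow_card, pow_zero, pow_one, add_left_inj] at h
  simp only [absTrace, ← pow_mul, ← pow_succ', h]

lemma absTrace_pow_two_pow (hF : Fintype.card F = 2 ^ m) (y : F) (k : ℕ) :
    absTrace m (y ^ 2 ^ k) = absTrace m y := by
  induction k with
  | zero => rw [pow_zero, pow_one]
  | succ k ih => rw [pow_succ, pow_mul, absTrace_pow_two hF, ih]

lemma algebraMap_trace_eq_absTrace [Algebra (ZMod 2) F] (hF : Fintype.card F = 2 ^ m) (y : F) :
    algebraMap (ZMod 2) F (Algebra.trace (ZMod 2) F y) = absTrace m y := by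
  have hfinrank : Module.finrank (ZMod 2) F = m := by
    rw [Module.card_eq_pow_finrank (K := ZMod 2), ZMod.card] at hF
    exact Nat.pow_right_injective le_rfl hF
  rw [FiniteField.algebraMap_trace_eq_sum_pow, hfinrank, Nat.card_zmod, absTrace]

-- `h ↦ h ^ 2 ^ (m * s - s)` inverts `h ↦ h ^ 2 ^ s` on `F`, so the left-hand side is `L h`.
lemma gold_radical_iff [CharP F 2] (hF : Fintype.card F = 2 ^ m) (hm : Odd m) {s : ℕ}
    (hsm : Nat.gcd s m = 1) (h : F) :
    h ^ 2 ^ (m * s - s) + h ^ 2 ^ s = 0 ↔ h = 0 ∨ h = 1 := by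
  rw [CharTwo.add_eq_zero, ← IsIdempotentElem.iff_eq_zero_or_one]
  constructor
  · intro heq
    have h2s : h ^ 2 ^ (2 * s) = h := by
      calc h ^ 2 ^ (2 * s) = (h ^ 2 ^ (m * s - s)) ^ 2 ^ s := by
            rw [heq, ← pow_mul, ← pow_add, two_mul]
        _ = h := by
            rw [← pow_mul, ← pow_add, Nat.sub_add_cancel (Nat.le_mul_of_pos_left s hm.pos),
              pow_two_pow_mul_eq_self hF]
    have hcop : Nat.gcd (2 * s) m = 1 := Nat.Coprime.mul_left (Nat.coprime_two_left.mpr hm) hsm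
    have h2 := pow_pow_gcd_eq_self h2s (by simpa using pow_two_pow_mul_eq_self hF h 1)
    rwa [hcop, pow_one, sq] at h2
  · intro hidem
    have hfix (n : ℕ) : h ^ 2 ^ n = h := by
      induction n with
      | zero => rw [pow_zero, pow_one]
      | succ n ih => rw [pow_succ, pow_mul, ih, sq, hidem.eq]
    rw [hfix, hfix]

variable [DecidableEq F]

lemma chi_eq_ite_trace [Algebra (ZMod 2) F] (hF : Fintype.card F = 2 ^ m) (y : F) :
    chi m y = if Algebra.trace (ZMod 2) F y = 0 then 1 else -1 := by
  simp only [chi_eq_ite_absTrace, ← algebraMap_trace_eq_absTrace hF,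
    map_eq_zero_iff _ (algebraMap (ZMod 2) F).injective]

variable [CharP F 2]

def traceChar (hF : Fintype.card F = 2 ^ m) : AddChar F ℤ where
  toFun := chi m
  map_zero_eq_one' := by simp [chi_eq_ite_absTrace, absTrace]
  map_add_eq_mul' y z := by
    let := ZMod.algebra F 2
    simp only [chi_eq_ite_trace hF, map_add]
    generalize Algebra.trace (ZMod 2) F y = t
    generalize Algebra.trace (ZMod 2) F z = u
    revert t u
    decide

lemma traceChar_apply (hF : Fintype.card F = 2 ^ m) (y : F) : traceChar hF y = chi m y := rfl

lemma traceChar_eq_one_iff (hF : Fintype.card F = 2 ^ m) (y : F) :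
    traceChar hF y = 1 ↔ absTrace m y = 0 := by
  simp [traceChar_apply, chi_eq_ite_absTrace]

lemma traceChar_isPrimitive (hF : Fintype.card F = 2 ^ m) : (traceChar hF).IsPrimitive := by
  let := ZMod.algebra F 2
  refine AddChar.IsPrimitive.of_ne_one fun h => ?_
  obtain ⟨y, hy⟩ := Algebra.trace_surjective (ZMod 2) F 1
  have := DFunLike.congr_fun h y
  rw [traceChar_apply, chi_eq_ite_trace hF, hy] at this
  simp at this

lemma traceChar_one (hF : Fintype.card F = 2 ^ m) (hm : Odd m) : traceChar hF 1 = -1 := by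
  have : absTrace m (1 : F) = 1 := by
    simp [absTrace, CharTwo.natCast_eq_ite, Nat.not_even_iff_odd.mpr hm]
  simp [traceChar_apply, chi_eq_ite_absTrace, this]

lemma traceChar_pow_two_pow (hF : Fintype.card F = 2 ^ m) (y : F) (k : ℕ) :
    traceChar hF (y ^ 2 ^ k) = traceChar hF y := by
  simp only [traceChar_apply, chi_eq_ite_absTrace, absTrace_pow_two_pow hF]

lemma traceChar_gold_add (hF : Fintype.card F = 2 ^ m) (hm : m ≠ 0) (s : ℕ) (a x h : F) :
    traceChar hF ((x + h) ^ (2 ^ s + 1) + a * (x + h)) =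
      traceChar hF (x ^ (2 ^ s + 1) + a * x) * traceChar hF (h ^ (2 ^ s + 1) + a * h) *
        traceChar hF (x * (h ^ 2 ^ (m * s - s) + h ^ 2 ^ s)) := by
  have hcross : traceChar hF (x ^ 2 ^ s * h) = traceChar hF (x * h ^ 2 ^ (m * s - s)) := by
    rw [← traceChar_pow_two_pow hF (x * _) s, mul_pow, ← pow_mul, ← pow_add,
      Nat.sub_add_cancel (Nat.le_mul_of_pos_left s (Nat.pos_of_ne_zero hm)),
      pow_two_pow_mul_eq_self hF]
  have hexpand : (x + h) ^ (2 ^ s + 1) + a * (x + h) =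
      (x ^ (2 ^ s + 1) + a * x) + (h ^ (2 ^ s + 1) + a * h) + (x ^ 2 ^ s * h + x * h ^ 2 ^ s) := by
    rw [pow_succ, add_pow_char_pow]
    ring
  rw [hexpand, AddChar.map_add_eq_mul _ (_ + _), AddChar.map_add_eq_mul _ (x ^ (2 ^ s + 1) + a * x),
    AddChar.map_add_eq_mul _ (x ^ 2 ^ s * h), hcross, ← AddChar.map_add_eq_mul _ (x * _), mul_add]

end TraceCharacter

theorem stmt_12 (m s : ℕ) (hmodd : Odd m) (hsm : Nat.gcd s m = 1)
    (F : Type*) [Field F] [Fintype F] [DecidableEq F]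
    (hF : Fintype.card F = 2 ^ m) (a : F) :
    (∑ x : F, chi m (x ^ (2 ^ s + 1) + a * x)) = 0 ↔
      (∑ i ∈ Finset.range m, a ^ 2 ^ i) = 0 := by
  have : CharP F 2 := charP_of_card_eq_prime_pow hF
  have hradical : ({h | h ^ 2 ^ (m * s - s) + h ^ 2 ^ s = 0} : Finset F) = {0, 1} := by
    ext h
    simp [gold_radical_iff hF hmodd hsm]
  have hsq : (∑ x, traceChar hF (x ^ (2 ^ s + 1) + a * x)) ^ 2 =
      2 ^ m * (1 - traceChar hF a) := by
    rw [sq_sum_addChar_eq_card_mul_sum_radical (traceChar_isPrimitive hF)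
      (traceChar_gold_add hF hmodd.pos.ne' s a), hradical, Finset.sum_pair zero_ne_one]
    simp [hF, AddChar.map_add_eq_mul, traceChar_one hF hmodd, sub_eq_add_neg]
  simp only [← traceChar_apply hF]
  rw [← sq_eq_zero_iff, hsq, mul_eq_zero, or_iff_right (by positivity), sub_eq_zero,
    eq_comm, traceChar_eq_one_iff hF]
  rfl
end

section
/- Let m be odd and gcd(s, m) = 1. The set {h^{2^s} + h^{2^{m-s}} : h ∈ F_{2^m}} is exactly {x ∈ F_{2^m} : Tr^m_1(x) = 0}, and the map h ↦ h^{2^s} + h^{2^{m-s}} is two-to-one (h and h+1 have the same image). -/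
/-!
The map `L h = h ^ 2 ^ s + h ^ 2 ^ (m - s)` is `𝔽₂`-linear. If `L h = 0`, raising
`h ^ 2 ^ s = h ^ 2 ^ (m - s)` to the power `2 ^ s` gives `h ^ 2 ^ (2 * s) = h ^ 2 ^ m = h`, and
since `gcd (2 * s, m) = 1` this forces `h ^ 2 = h`; so `ker L = {0, 1}`, which is the two-to-one
statement. The trace is invariant under Frobenius, so `L` lands in its kernel; the trace is
onto `𝔽₂`, hence its kernel and the image of `L` both have `2 ^ (m - 1)` elements.
-/

open Finset

theorem pow_eq_self_of_pow_pow_eq_self_of_coprime {M : Type*} [Monoid M] {p k n : ℕ} {x : M}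
    (hk : x ^ p ^ k = x) (hn : x ^ p ^ n = x) (hkn : k.Coprime n) : x ^ p = x := by
  have hper : ∀ j, x ^ p ^ j = x → Function.IsPeriodicPt (· ^ p) j x := fun j hj => by
    rwa [Function.IsPeriodicPt, Function.IsFixedPt, pow_iterate]
  simpa [Function.IsPeriodicPt, Function.IsFixedPt, hkn.gcd_eq_one] using
    (hper k hk).gcd (hper n hn)

theorem AddMonoidHom.range_eq_ker_of_card_le {A B C : Type*} [AddGroup A] [AddGroup B]
    [AddGroup C] [Finite B] (f : A →+ B) (g : B →+ C) (hfg : f.range ≤ g.ker)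
    (hcard : Nat.card B ≤ Nat.card A) (hker : Nat.card f.ker ≤ Nat.card g.range) :
    f.range = g.ker := by
  have hA := f.ker.card_mul_index
  have hB := g.ker.card_mul_index
  rw [AddSubgroup.index_ker] at hA hB
  have : Finite g.range := Finite.of_surjective _ g.rangeRestrict_surjective
  have hrange : 0 < Nat.card g.range := Nat.card_pos
  refine AddSubgroup.eq_of_le_of_card_ge hfg (Nat.le_of_mul_le_mul_right ?_ hrange)
  calc Nat.card g.ker * Nat.card g.range = Nat.card B := hB
    _ ≤ Nat.card f.ker * Nat.card f.range := hA ▸ hcard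
    _ ≤ Nat.card f.range * Nat.card g.range := by
      rw [mul_comm]; exact Nat.mul_le_mul_left _ hker

section FiniteField

variable {F : Type*} [Field F] [Fintype F] {p m : ℕ}

theorem eq_zero_or_one_of_pow_two_pow_eq_self (hF : Fintype.card F = 2 ^ m) {k : ℕ}
    (hkm : k.Coprime m) {x : F} (hx : x ^ 2 ^ k = x) : x = 0 ∨ x = 1 := by
  refine IsIdempotentElem.iff_eq_zero_or_one.mp ?_
  rw [IsIdempotentElem, ← sq]
  exact pow_eq_self_of_pow_pow_eq_self_of_coprime hx (hF ▸ FiniteField.pow_card x) hkm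

theorem finrank_zmod_eq_of_card [Fact p.Prime] [Algebra (ZMod p) F]
    (hF : Fintype.card F = p ^ m) : Module.finrank (ZMod p) F = m := by
  have h := FiniteField.pow_finrank_eq_natCard p F
  rw [Nat.card_eq_fintype_card, hF] at h
  exact Nat.pow_right_injective (Fact.out : p.Prime).two_le h

theorem algebraMap_trace_eq_sum_pow_pow [Fact p.Prime] [Algebra (ZMod p) F]
    (hF : Fintype.card F = p ^ m) (x : F) :
    algebraMap (ZMod p) F (Algebra.trace (ZMod p) F x) = ∑ i ∈ range m, x ^ p ^ i := by
  rw [FiniteField.algebraMap_trace_eq_sum_pow, finrank_zmod_eq_of_card hF, Nat.card_zmod]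

theorem trace_pow_pow [Fact p.Prime] [Algebra (ZMod p) F] (x : F) (k : ℕ) :
    Algebra.trace (ZMod p) F (x ^ p ^ k) = Algebra.trace (ZMod p) F x := by
  have := Algebra.trace_eq_of_algEquiv (FiniteField.frobeniusAlgEquivOfAlgebraic (ZMod p) F ^ k) x
  rwa [AlgEquiv.coe_pow, FiniteField.coe_frobeniusAlgEquivOfAlgebraic_iterate, ZMod.card] at this

end FiniteField

section CharTwo

variable {F : Type*} [Field F] [CharP F 2] {m s : ℕ}

variable (F) in
def frobeniusPowSum (s t : ℕ) : F →+ F :=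
  (iterateFrobenius F 2 s).toAddMonoidHom + (iterateFrobenius F 2 t).toAddMonoidHom

@[simp]
theorem frobeniusPowSum_apply (s t : ℕ) (h : F) :
    frobeniusPowSum F s t h = h ^ 2 ^ s + h ^ 2 ^ t :=
  rfl

theorem frobeniusPowSum_eq_zero_iff [Fintype F] (hF : Fintype.card F = 2 ^ m) (hm : Odd m)
    (hsm : s.Coprime m) {h : F} : frobeniusPowSum F s (m - s) h = 0 ↔ h = 0 ∨ h = 1 := by
  refine ⟨fun hh => ?_, by rintro (rfl | rfl) <;> simp [CharTwo.add_self_eq_zero]⟩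
  rw [frobeniusPowSum_apply, CharTwo.add_eq_zero] at hh
  have hfix : h ^ 2 ^ m = h := hF ▸ FiniteField.pow_card h
  rcases le_or_gt s m with hle | hlt
  · have hcop : (s + s).Coprime m := by
      rw [← two_mul]; exact (Nat.coprime_two_left.mpr hm).mul_left hsm
    refine eq_zero_or_one_of_pow_two_pow_eq_self hF hcop ?_
    calc h ^ 2 ^ (s + s) = (h ^ 2 ^ (m - s)) ^ 2 ^ s := by rw [← hh, pow_add, pow_mul]
      _ = h := by rw [← pow_mul, ← pow_add, Nat.sub_add_cancel hle, hfix]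
  · -- here the truncated difference `m - s` is `0`
    rw [Nat.sub_eq_zero_of_le hlt.le, pow_zero, pow_one] at hh
    exact eq_zero_or_one_of_pow_two_pow_eq_self hF hsm hh

theorem frobeniusPowSum_eq_iff [Fintype F] (hF : Fintype.card F = 2 ^ m) (hm : Odd m)
    (hsm : s.Coprime m) {h₁ h₂ : F} :
    frobeniusPowSum F s (m - s) h₁ = frobeniusPowSum F s (m - s) h₂ ↔ h₂ = h₁ ∨ h₂ = h₁ + 1 := by
  rw [← CharTwo.add_eq_zero, ← map_add, frobeniusPowSum_eq_zero_iff hF hm hsm,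
    CharTwo.add_eq_zero, eq_comm, add_comm h₁, CharTwo.add_eq_iff_eq_add, add_comm 1]

theorem range_frobeniusPowSum_eq_ker_trace [Fintype F] [Algebra (ZMod 2) F]
    (hF : Fintype.card F = 2 ^ m) (hm : Odd m) (hsm : s.Coprime m) :
    (frobeniusPowSum F s (m - s)).range = (Algebra.trace (ZMod 2) F).toAddMonoidHom.ker := by
  have : Fact (Nat.Prime 2) := ⟨Nat.prime_two⟩
  refine AddMonoidHom.range_eq_ker_of_card_le _ _ ?_ le_rfl ?_
  · rintro _ ⟨h, rfl⟩
    simp [trace_pow_pow, CharTwo.add_self_eq_zero]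
  · have hker : ((frobeniusPowSum F s (m - s)).ker : Set F) = {0, 1} :=
      Set.ext fun h => frobeniusPowSum_eq_zero_iff hF hm hsm
    rw [← SetLike.coe_sort_coe, hker, Nat.card_coe_set_eq, Set.ncard_pair zero_ne_one,
      AddMonoidHom.range_eq_top.mpr (Algebra.trace_surjective _ _), AddSubgroup.card_top,
      Nat.card_zmod]

end CharTwo

theorem stmt_13 (m s : ℕ) (hmodd : Odd m) (hsm : Nat.gcd s m = 1)
    (F : Type*) [Field F] [Fintype F]
    (hF : Fintype.card F = 2 ^ m) :
    ({x : F | ∃ h : F, x = h ^ 2 ^ s + h ^ 2 ^ (m - s)} =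
        {x : F | (∑ i ∈ Finset.range m, x ^ 2 ^ i) = 0}) ∧
    (∀ h₁ h₂ : F, h₁ ^ 2 ^ s + h₁ ^ 2 ^ (m - s) = h₂ ^ 2 ^ s + h₂ ^ 2 ^ (m - s) ↔
        h₂ = h₁ ∨ h₂ = h₁ + 1) := by
  have : Fact (Nat.Prime 2) := ⟨Nat.prime_two⟩
  have : CharP F 2 := charP_of_card_eq_prime_pow hF
  let := ZMod.algebra F 2
  refine ⟨?_, fun h₁ h₂ => frobeniusPowSum_eq_iff hF hmodd hsm⟩
  ext x
  rw [Set.mem_ofPred_eq, Set.mem_ofPred_eq, ← algebraMap_trace_eq_sum_pow_pow hF,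
    FaithfulSMul.algebraMap_eq_zero_iff, ← LinearMap.toAddMonoidHom_coe, ← AddMonoidHom.mem_ker,
    ← range_frobeniusPowSum_eq_ker_trace hF hmodd hsm, AddMonoidHom.mem_range]
  simp only [frobeniusPowSum_apply, eq_comm]
end

section
/- Let μ ∈ F_{2^m}^* and K_m(μ) = Σ_{x ∈ F_{2^m}^*} (-1)^{Tr^m_1(μx + x^{-1})}. Then Σ_{v ∈ F_{2^m}: Tr^m_1(v)=1} (-1)^{Tr^m_1(μ/v)} = -(1 + K_m(μ))/2. -/
open Finset

section Aux

variable {F : Type*} [Field F] [Fintype F] [DecidableEq F] {m : ℕ}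

/-- abbreviation for the concrete trace sum -/
private def Tr (m : ℕ) (y : F) : F := ∑ i ∈ Finset.range m, y ^ 2 ^ i

private lemma char2 (hm : 1 ≤ m) (hF : Fintype.card F = 2 ^ m) : CharP F 2 := by
  have h0 : ((2 ^ m : ℕ) : F) = 0 := by
    rw [← hF]; exact FiniteField.cast_card_eq_zero F
  have h2 : ((2 : ℕ) : F) = 0 := by
    push_cast at h0
    exact pow_eq_zero_iff (by omega) |>.mp h0
  have hdvd : ringChar F ∣ 2 := ringChar.dvd h2
  have hne1 : ringChar F ≠ 1 := CharP.ringChar_ne_one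
  have : ringChar F = 2 := by
    rcases (Nat.dvd_prime Nat.prime_two).mp hdvd with h | h
    · exact absurd h hne1
    · exact h
  exact this ▸ ringChar.charP F

private lemma Tr_add (hm : 1 ≤ m) (hF : Fintype.card F = 2 ^ m) (a b : F) :
    Tr m (a + b) = Tr m a + Tr m b := by
  haveI := char2 hm hF
  simp only [Tr, add_pow_char_pow, Finset.sum_add_distrib]

private lemma Tr_sq (hm : 1 ≤ m) (hF : Fintype.card F = 2 ^ m) (y : F) :
    Tr m y ^ 2 = Tr m y := by
  haveI := char2 hm hF
  have h1 : Tr m y ^ 2 = ∑ i ∈ Finset.range m, y ^ 2 ^ (i + 1) := by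
    rw [Tr, sum_pow_char]
    refine Finset.sum_congr rfl fun i _ => ?_
    rw [← pow_mul, pow_succ]
  have hym : y ^ 2 ^ m = y := by rw [← hF]; exact FiniteField.pow_card y
  have e1 : ∑ i ∈ Finset.range (m + 1), y ^ 2 ^ i
      = y + ∑ i ∈ Finset.range m, y ^ 2 ^ (i + 1) := by
    rw [Finset.sum_range_succ' (fun i => y ^ 2 ^ i) m]
    simp [add_comm]
  have e2 : ∑ i ∈ Finset.range (m + 1), y ^ 2 ^ i = Tr m y + y := by
    rw [Finset.sum_range_succ, hym, Tr]
  rw [h1]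
  have := e1.symm.trans e2
  -- y + S' = Tr + y
  have := congrArg (fun t => t - y) this
  rw [add_comm y _] at this
  simpa using this

private lemma Tr_zero_or_one (hm : 1 ≤ m) (hF : Fintype.card F = 2 ^ m) (y : F) :
    Tr m y = 0 ∨ Tr m y = 1 := by
  have h := Tr_sq hm hF y
  have : Tr m y * (Tr m y - 1) = 0 := by ring_nf; linear_combination h
  rcases mul_eq_zero.mp this with h' | h'
  · exact Or.inl h'
  · exact Or.inr (by linear_combination h')

private lemma Tr_zero_val (hm : 1 ≤ m) : Tr m (0 : F) = 0 :=
  Finset.sum_eq_zero fun i _ => zero_pow (pow_ne_zero i two_ne_zero)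

private lemma chi_eq (y : F) : chi m y = if Tr m y = 0 then 1 else -1 := rfl

private lemma chi_add (hm : 1 ≤ m) (hF : Fintype.card F = 2 ^ m) (a b : F) :
    chi m (a + b) = chi m a * chi m b := by
  haveI := char2 hm hF
  have h11 : (1 : F) + 1 = 0 := by
    have := CharP.cast_eq_zero F 2
    rwa [show ((2 : ℕ) : F) = 1 + 1 by push_cast; ring] at this
  have h10 : (1 : F) ≠ 0 := one_ne_zero
  rw [chi_eq, chi_eq, chi_eq, Tr_add hm hF]
  rcases Tr_zero_or_one hm hF a with ha | ha <;>
    rcases Tr_zero_or_one hm hF b with hb | hb <;>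
      simp [ha, hb, h11, h10]

end Aux

theorem stmt_19 (m : ℕ) (hm : 1 ≤ m) (F : Type*) [Field F] [Fintype F] [DecidableEq F]
    (hF : Fintype.card F = 2 ^ m) (μ : F) (hμ : μ ≠ 0) :
    2 * ∑ v ∈ univ.filter (fun v : F => (∑ i ∈ Finset.range m, v ^ 2 ^ i) = 1),
        chi m (μ * v⁻¹)
      = -(1 + ∑ x ∈ univ.filter (fun x : F => x ≠ 0), chi m (μ * x + x⁻¹)) := by
  classical
  haveI := char2 hm hF
  -- notation
  set A : Finset F := univ.filter (fun x : F => x ≠ 0) with hA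
  have hTr1 : (univ.filter (fun v : F => (∑ i ∈ Finset.range m, v ^ 2 ^ i) = 1))
      = univ.filter (fun v : F => Tr m v = 1) := rfl
  rw [hTr1]
  have hzero_mem : ∀ v : F, Tr m v = 1 → v ≠ 0 := by
    intro v hv h0
    rw [h0, Tr_zero_val hm] at hv
    exact one_ne_zero hv.symm
  -- existence of element of trace 1
  obtain ⟨v₀, hv₀⟩ : ∃ v : F, Tr m v = 1 := by
    by_contra hcon
    push_neg at hcon
    have hall : ∀ y : F, Tr m y = 0 := fun y =>
      (Tr_zero_or_one hm hF y).resolve_right (hcon y)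
    -- polynomial argument
    set p : Polynomial F := ∑ i ∈ Finset.range m, Polynomial.X ^ 2 ^ i with hp
    have heval : ∀ y : F, p.eval y = 0 := by
      intro y
      have : p.eval y = Tr m y := by
        simp [hp, Polynomial.eval_finset_sum, Tr]
      rw [this, hall]
    have hdeg : p.natDegree ≤ 2 ^ (m - 1) := by
      refine Polynomial.natDegree_sum_le_of_forall_le _ _ fun i hi => ?_
      rw [Polynomial.natDegree_X_pow]
      exact Nat.pow_le_pow_right (by norm_num) (by
        have := Finset.mem_range.mp hi; omega)
    have hcard : p.natDegree < Fintype.card F := by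
      rw [hF]
      calc p.natDegree ≤ 2 ^ (m - 1) := hdeg
        _ < 2 ^ m := Nat.pow_lt_pow_right (by norm_num) (by omega)
    have hp0 : p = 0 :=
      Polynomial.eq_zero_of_natDegree_lt_card_of_eval_eq_zero p Function.injective_id
        (fun y => heval y) hcard
    have hcoeff : p.coeff (2 ^ (m - 1)) = 1 := by
      rw [hp, Polynomial.finset_sum_coeff]
      have : ∀ i ∈ Finset.range m,
          (Polynomial.X ^ 2 ^ i : Polynomial F).coeff (2 ^ (m - 1))
            = if i = m - 1 then 1 else 0 := by
        intro i hi
        rw [Polynomial.coeff_X_pow]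
        congr 1
        simp only [eq_iff_iff]
        constructor
        · intro h
          exact (Nat.pow_right_injective (le_refl 2) h.symm)
        · intro h; rw [h]
      rw [Finset.sum_congr rfl this, Finset.sum_ite_eq' (Finset.range m) (m - 1)]
      simp [Finset.mem_range]; omega
    rw [hp0] at hcoeff
    simp at hcoeff
  -- balancedness: the two trace fibers have equal size
  have hbal : (univ.filter (fun v : F => Tr m v = 1)).card
      = (univ.filter (fun v : F => Tr m v = 0)).card := by
    apply Finset.card_nbij' (i := fun y => y + v₀) (j := fun y => y + v₀)
    · intro a ha
      simp only [Finset.mem_coe, Finset.mem_filter, Finset.mem_univ, true_and] at ha ⊢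
      rw [Tr_add hm hF, ha, hv₀]
      have := CharP.cast_eq_zero F 2
      rwa [show ((2 : ℕ) : F) = 1 + 1 by push_cast; ring] at this
    · intro a ha
      simp only [Finset.mem_coe, Finset.mem_filter, Finset.mem_univ, true_and] at ha ⊢
      rw [Tr_add hm hF, ha, hv₀, zero_add]
    · intro a _
      simp [add_assoc, CharTwo.add_self_eq_zero]
    · intro a _
      simp [add_assoc, CharTwo.add_self_eq_zero]
  have hchi0 : chi m (0 : F) = 1 := by
    rw [chi_eq, Tr_zero_val hm, if_pos rfl]
  -- total sum of chi is zero
  have htotal : ∑ y : F, chi m y = 0 := by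
    rw [← Finset.sum_filter_add_sum_filter_not univ (fun v : F => Tr m v = 0)]
    have hf1 : univ.filter (fun v : F => ¬ Tr m v = 0)
        = univ.filter (fun v : F => Tr m v = 1) := by
      apply Finset.filter_congr
      intro v _
      rcases Tr_zero_or_one hm hF v with h | h <;> simp [h]
    rw [hf1]
    have e0 : ∑ y ∈ univ.filter (fun v : F => Tr m v = 0), chi m y
        = (univ.filter (fun v : F => Tr m v = 0)).card := by
      rw [Finset.sum_congr rfl (fun y hy => ?_), Finset.sum_const, nsmul_eq_mul, mul_one]
      rw [chi_eq, if_pos (Finset.mem_filter.mp hy).2]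
    have e1 : ∑ y ∈ univ.filter (fun v : F => Tr m v = 1), chi m y
        = -((univ.filter (fun v : F => Tr m v = 1)).card : ℤ) := by
      rw [Finset.sum_congr rfl (fun y hy => ?_), Finset.sum_const, nsmul_eq_mul, mul_neg_one]
      have := (Finset.mem_filter.mp hy).2
      rw [chi_eq, if_neg (by rw [this]; exact one_ne_zero)]
    rw [e0, e1, hbal]
    ring
  -- sum over nonzero elements of chi (μ * x)
  have hsum_nonzero : ∑ x ∈ A, chi m (μ * x⁻¹) = -1 := by
    have step1 : ∑ x ∈ A, chi m (μ * x⁻¹) = ∑ x ∈ A, chi m (μ * x) := by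
      refine Finset.sum_nbij' (i := fun x => x⁻¹) (j := fun x => x⁻¹) ?_ ?_ ?_ ?_ ?_
      · intro a ha; simp only [hA, Finset.mem_filter, Finset.mem_univ, true_and] at ha ⊢
        exact inv_ne_zero ha
      · intro a ha; simp only [hA, Finset.mem_filter, Finset.mem_univ, true_and] at ha ⊢
        exact inv_ne_zero ha
      · intro a _; simp
      · intro a _; simp
      · intro a _; simp
    have step2 : ∑ x ∈ A, chi m (μ * x) = ∑ x ∈ A, chi m x := by
      refine Finset.sum_nbij' (i := fun x => μ * x) (j := fun x => μ⁻¹ * x) ?_ ?_ ?_ ?_ ?_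
      · intro a ha; simp only [hA, Finset.mem_filter, Finset.mem_univ, true_and] at ha ⊢
        exact mul_ne_zero hμ ha
      · intro a ha; simp only [hA, Finset.mem_filter, Finset.mem_univ, true_and] at ha ⊢
        exact mul_ne_zero (inv_ne_zero hμ) ha
      · intro a _; rw [← mul_assoc, inv_mul_cancel₀ hμ, one_mul]
      · intro a _; rw [← mul_assoc, mul_inv_cancel₀ hμ, one_mul]
      · intro a _; rfl
    have step3 : ∑ x ∈ A, chi m x = -1 := by
      have : ∑ y : F, chi m y = chi m (0 : F) + ∑ x ∈ A, chi m x := by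
        rw [hA, Finset.filter_ne']
        exact (Finset.add_sum_erase univ (chi m) (Finset.mem_univ (0 : F))).symm
      rw [htotal, hchi0] at this
      linarith
    rw [step1, step2, step3]
  -- the Tr=1 filter inside A
  have hAfilter : A.filter (fun v : F => Tr m v = 1)
      = univ.filter (fun v : F => Tr m v = 1) := by
    ext v
    simp only [hA, Finset.mem_filter, Finset.mem_univ, true_and, Finset.filter_filter]
    constructor
    · rintro ⟨_, h⟩; exact h
    · intro h; exact ⟨hzero_mem v h, h⟩
  set S1 : ℤ := ∑ v ∈ univ.filter (fun v : F => Tr m v = 1), chi m (μ * v⁻¹) with hS1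
  set S0 : ℤ := ∑ v ∈ A.filter (fun v : F => Tr m v = 0), chi m (μ * v⁻¹) with hS0
  -- split of the nonzero sum
  have hsplit : S0 + S1 = -1 := by
    rw [hS0, hS1, ← hAfilter]
    have hfneg : A.filter (fun v : F => ¬ Tr m v = 0) = A.filter (fun v : F => Tr m v = 1) := by
      apply Finset.filter_congr
      intro v _
      rcases Tr_zero_or_one hm hF v with h | h <;> simp [h]
    rw [← hfneg, Finset.sum_filter_add_sum_filter_not A (fun v : F => Tr m v = 0)]
    exact hsum_nonzero
  -- Kloosterman sum computation
  have hK : ∑ x ∈ A, chi m (μ * x + x⁻¹) = S0 - S1 := by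
    have step1 : ∑ x ∈ A, chi m (μ * x + x⁻¹) = ∑ x ∈ A, chi m (μ * x⁻¹ + x) := by
      refine Finset.sum_nbij' (i := fun x => x⁻¹) (j := fun x => x⁻¹) ?_ ?_ ?_ ?_ ?_
      · intro a ha; simp only [hA, Finset.mem_filter, Finset.mem_univ, true_and] at ha ⊢
        exact inv_ne_zero ha
      · intro a ha; simp only [hA, Finset.mem_filter, Finset.mem_univ, true_and] at ha ⊢
        exact inv_ne_zero ha
      · intro a _; simp
      · intro a _; simp
      · intro a _; simp
    rw [step1]
    have step2 : ∀ x ∈ A, chi m (μ * x⁻¹ + x) = chi m (μ * x⁻¹) * chi m x :=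
      fun x _ => chi_add hm hF _ _
    rw [Finset.sum_congr rfl step2]
    rw [← Finset.sum_filter_add_sum_filter_not A (fun v : F => Tr m v = 0)]
    have hfneg : A.filter (fun v : F => ¬ Tr m v = 0) = A.filter (fun v : F => Tr m v = 1) := by
      apply Finset.filter_congr
      intro v _
      rcases Tr_zero_or_one hm hF v with h | h <;> simp [h]
    rw [hfneg]
    have e0 : ∑ x ∈ A.filter (fun v : F => Tr m v = 0), chi m (μ * x⁻¹) * chi m x = S0 := by
      rw [hS0]
      refine Finset.sum_congr rfl fun x hx => ?_
      rw [chi_eq x, if_pos (Finset.mem_filter.mp hx).2, mul_one]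
    have e1 : ∑ x ∈ A.filter (fun v : F => Tr m v = 1), chi m (μ * x⁻¹) * chi m x = -S1 := by
      rw [hS1, ← hAfilter, ← Finset.sum_neg_distrib]
      refine Finset.sum_congr rfl fun x hx => ?_
      have := (Finset.mem_filter.mp hx).2
      rw [chi_eq x, if_neg (by rw [this]; exact one_ne_zero), mul_neg_one]
    rw [e0, e1]
    ring
  rw [hK]
  linarith
end
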